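/- Let φ : [0,T] → ℝ be continuous, nonnegative, with φ(t) ≤ exp(C exp(C ∫₀ᵗ φ(s)^α ds)) for all t ∈ [0,T], where C ≥ 1 and α > 1 are constants. Then, setting M = e^{Ce} and T₀ = min{T, (C M^α)^{-1}}, one has φ(t) ≤ M for all t ∈ [0, T₀]. -/
import Mathlib


open MeasureTheory Real Filter

/-- bootstrap argument — if φ(t) ≤ exp(C exp(C ∫₀ᵗ φ^α)) on [0,T]
with C ≥ 1, α > 1, then φ ≤ M := e^{Ce} on [0, T₀] with T₀ = min{T, (C M^α)⁻¹}. -/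
theorem stmt9 (T C α : ℝ) (hT : 0 ≤ T) (hC : 1 ≤ C) (hα : 1 < α)
    (φ : ℝ → ℝ) (hcont : ContinuousOn φ (Set.Icc 0 T))
    (hnonneg : ∀ t ∈ Set.Icc 0 T, 0 ≤ φ t)
    (hineq : ∀ t ∈ Set.Icc 0 T,
      φ t ≤ Real.exp (C * Real.exp (C * ∫ s in (0 : ℝ)..t, φ s ^ α))) :
    ∀ t ∈ Set.Icc 0 (min T (C * Real.exp (C * Real.exp 1) ^ α)⁻¹),
      φ t ≤ Real.exp (C * Real.exp 1) := by
  set M := Real.exp (C * Real.exp 1) with hMdef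
  set T₀ := min T (C * M ^ α)⁻¹ with hT₀def
  have hC0 : (0:ℝ) < C := lt_of_lt_of_le one_pos hC
  have hαpos : (0:ℝ) < α := lt_trans one_pos hα
  have hMpos : 0 < M := Real.exp_pos _
  have hMα : 0 < M ^ α := Real.rpow_pos_of_pos hMpos α
  have hCM : 0 < C * M ^ α := by positivity
  have hT₀T : T₀ ≤ T := min_le_left _ _
  have hT₀inv : T₀ ≤ (C * M ^ α)⁻¹ := min_le_right _ _
  have hT₀0 : 0 ≤ T₀ := le_min hT (inv_nonneg.mpr hCM.le)
  have hφα : ContinuousOn (fun s => φ s ^ α) (Set.Icc 0 T) :=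
    hcont.rpow_const (fun x _ => Or.inr hαpos.le)
  -- key estimate
  have key : ∀ t ∈ Set.Icc 0 T₀, (∀ s ∈ Set.Icc 0 t, φ s ≤ M) →
      φ t ≤ Real.exp (C * Real.exp (C * (t * M ^ α))) := by
    intro t ht hb
    have htT : t ∈ Set.Icc 0 T := ⟨ht.1, ht.2.trans hT₀T⟩
    have hInt : ∫ s in (0:ℝ)..t, φ s ^ α ≤ t * M ^ α := by
      have h1 : IntervalIntegrable (fun s => φ s ^ α) volume 0 t := by
        apply ContinuousOn.intervalIntegrable
        apply hφα.mono
        rw [Set.uIcc_of_le ht.1]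
        exact Set.Icc_subset_Icc le_rfl htT.2
      have h2 : IntervalIntegrable (fun _ : ℝ => M ^ α) volume 0 t :=
        intervalIntegrable_const
      have := intervalIntegral.integral_mono_on ht.1 h1 h2
        (fun s hs => Real.rpow_le_rpow (hnonneg s ⟨hs.1, hs.2.trans htT.2⟩) (hb s hs) hαpos.le)
      simpa using this
    calc φ t ≤ Real.exp (C * Real.exp (C * ∫ s in (0:ℝ)..t, φ s ^ α)) := hineq t htT
      _ ≤ Real.exp (C * Real.exp (C * (t * M ^ α))) := by
          gcongr
  have hmul : ∀ t, 0 ≤ t → t ≤ T₀ → C * (t * M ^ α) ≤ 1 := by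
    intro t _ h2
    have h3 : t ≤ (C * M ^ α)⁻¹ := h2.trans hT₀inv
    nlinarith [inv_mul_cancel₀ hCM.ne']
  have hmul' : ∀ t, 0 ≤ t → t < T₀ → C * (t * M ^ α) < 1 := by
    intro t _ h2
    have h3 : t < (C * M ^ α)⁻¹ := lt_of_lt_of_le h2 hT₀inv
    nlinarith [inv_mul_cancel₀ hCM.ne']
  have key2 : ∀ t ∈ Set.Icc 0 T₀, (∀ s ∈ Set.Icc 0 t, φ s ≤ M) → φ t ≤ M := by
    intro t ht hb
    refine (key t ht hb).trans ?_
    rw [hMdef]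
    apply Real.exp_le_exp.mpr
    exact mul_le_mul_of_nonneg_left
      (Real.exp_le_exp.mpr (hmul t ht.1 ht.2)) hC0.le
  have key3 : ∀ t ∈ Set.Icc 0 T₀, t < T₀ → (∀ s ∈ Set.Icc 0 t, φ s ≤ M) → φ t < M := by
    intro t ht hlt hb
    refine lt_of_le_of_lt (key t ht hb) ?_
    rw [hMdef]
    apply Real.exp_lt_exp.mpr
    exact mul_lt_mul_of_pos_left (Real.exp_lt_exp.mpr (hmul' t ht.1 hlt)) hC0
  have hφ0 : φ 0 ≤ M := by
    have h1 := hineq 0 ⟨le_rfl, hT⟩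
    simp only [intervalIntegral.integral_same, mul_zero, Real.exp_zero, mul_one] at h1
    refine h1.trans ?_
    rw [hMdef]
    have : C ≤ C * Real.exp 1 := by nlinarith [Real.exp_one_gt_d9]
    exact Real.exp_le_exp.mpr this
  -- the bootstrap set
  set S : Set ℝ := {t | t ∈ Set.Icc 0 T₀ ∧ ∀ s ∈ Set.Icc 0 t, φ s ≤ M} with hSdef
  have h0S : (0:ℝ) ∈ S := by
    refine ⟨⟨le_rfl, hT₀0⟩, fun s hs => ?_⟩
    have : s = 0 := le_antisymm hs.2 hs.1
    rw [this]; exact hφ0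
  have hneS : S.Nonempty := ⟨0, h0S⟩
  have hbddS : BddAbove S := ⟨T₀, fun x hx => hx.1.2⟩
  set τ := sSup S with hτdef
  have hτ0 : 0 ≤ τ := le_csSup hbddS h0S
  have hτT₀ : τ ≤ T₀ := csSup_le hneS (fun x hx => hx.1.2)
  have hτlt : ∀ s, 0 ≤ s → s < τ → φ s ≤ M := by
    intro s hs0 hsτ
    obtain ⟨t, htS, hst⟩ := exists_lt_of_lt_csSup hneS hsτ
    exact htS.2 s ⟨hs0, hst.le⟩
  have hτle : ∀ s ∈ Set.Icc 0 τ, φ s ≤ M := by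
    intro s hs
    rcases lt_or_eq_of_le hs.2 with h | h
    · exact hτlt s hs.1 h
    rcases eq_or_lt_of_le hs.1 with h0 | h0
    · rw [← h0]; exact hφ0
    · have hct : ContinuousWithinAt φ (Set.Icc 0 T) s :=
        hcont s ⟨hs.1, hs.2.trans hτT₀ |>.trans hT₀T⟩
      have hsub : Set.Ico 0 s ⊆ Set.Icc 0 T :=
        fun x hx => ⟨hx.1, (hx.2.le.trans hs.2).trans (hτT₀.trans hT₀T)⟩
      have htend : Filter.Tendsto φ (nhdsWithin s (Set.Ico 0 s)) (nhds (φ s)) :=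
        hct.mono hsub
      have : NeBot (nhdsWithin s (Set.Ico 0 s)) := right_nhdsWithin_Ico_neBot h0
      refine le_of_tendsto htend ?_
      filter_upwards [self_mem_nhdsWithin] with x hx
      exact hτlt x hx.1 (h ▸ hx.2)
  have hτS : τ ∈ S := ⟨⟨hτ0, hτT₀⟩, hτle⟩
  have hτeq : τ = T₀ := by
    by_contra hne
    have hlt : τ < T₀ := lt_of_le_of_ne hτT₀ hne
    have hφτ : φ τ < M := key3 τ ⟨hτ0, hτT₀⟩ hlt hτle
    have hct : ContinuousWithinAt φ (Set.Icc 0 T) τ :=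
      hcont τ ⟨hτ0, hτT₀.trans hT₀T⟩
    have hev : ∀ᶠ x in nhdsWithin τ (Set.Icc 0 T), φ x < M :=
      hct.eventually_lt_const hφτ
    rw [eventually_nhdsWithin_iff, Metric.eventually_nhds_iff] at hev
    obtain ⟨ε, hε, hball⟩ := hev
    set t' := min (τ + ε/2) T₀ with ht'def
    have ht'τ : τ < t' := lt_min (by linarith) hlt
    have ht'S : t' ∈ S := by
      refine ⟨⟨hτ0.trans ht'τ.le, min_le_right _ _⟩, fun s hs => ?_⟩
      rcases le_or_gt s τ with h | h
      · exact hτle s ⟨hs.1, h⟩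
      · refine le_of_lt (hball ?_ ⟨hs.1, hs.2.trans ((min_le_right _ _).trans hT₀T)⟩)
        have h1 : s ≤ τ + ε/2 := hs.2.trans (min_le_left _ _)
        rw [Real.dist_eq, abs_lt]
        constructor <;> linarith
    exact absurd (le_csSup hbddS ht'S) (not_le.mpr ht'τ)
  intro t ht
  exact hτS.2 t (by rw [hτeq]; exact ht)
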